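/- Let E be a Polish space with Borel σ-algebra 𝓔 and U a compact metric space, let P^a(x,·) be a controlled transition kernel, and let R ⊆ R₁ be two concentric closed balls in E. Let u_n, u : E → U be Borel measurable controls with u_n(x) → u(x) for every x ∈ E, such that for every x ∈ E, sup_{B ∈ 𝓔} |Q^{u_n}(x,B) − Q^{u}(x,B)| → 0 as n → ∞. Assume (EC): sup_{x ∈ R} sup_v E_x^v[(τ_R)²] < ∞, where the supremum over v runs over all controls v ∈ {u_n : n ∈ ℕ} ∪ {u} (in particular τ_R < ∞ P_x^v-a.s. for x ∈ R). Then for every x ∈ R, sup over Borel subsets B of R of |Π^{u_n}(x,B) − Π^{u}(x,B)| → 0 as n → ∞. -/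

import Mathlib

open MeasureTheory ProbabilityTheory Filter
open scoped ENNReal

/-- First hitting time of a set `B` by the path `ω` (`∞` if never hit). -/
noncomputable def hitTime {E : Type*} (B : Set E) (ω : ℕ → E) : ℕ∞ :=
  ⨅ (n : ℕ) (_ : ω n ∈ B), (n : ℕ∞)

/-- `τ_R = D_{R₁ᶜ} + D_R ∘ θ_{D_{R₁ᶜ}}`: first entrance time to `R` after first
leaving `R₁`. -/
noncomputable def tauR {E : Type*} (R R1 : Set E) (ω : ℕ → E) : ℕ∞ :=
  hitTime R1ᶜ ω + hitTime R (fun n => ω ((hitTime R1ᶜ ω).toNat + n))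

/-- Prepend a point to a path. -/
def prepend {E : Type*} (x : E) (ω : ℕ → E) : ℕ → E :=
  fun n => match n with
  | 0 => x
  | k + 1 => ω k

/-- `Pl` is the family of Ionescu–Tulcea laws `P_x` of the Markov chain with transition
kernel `Q` started at `x`: it is characterized by being a measurable family of
probability measures satisfying the one-step recursion
`P_x = (prepend x)_* ((Q x) bind Pl)`. -/
def IsPathLaw {E : Type*} [MeasurableSpace E] (Q : Kernel E E)
    (Pl : E → Measure (ℕ → E)) : Prop :=
  Measurable Pl ∧ (∀ x, IsProbabilityMeasure (Pl x)) ∧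
    ∀ x, Pl x = ((Q x).bind Pl).map (prepend x)

/-- The embedded kernel `Π(x,B) = P_x(τ_R < ∞, X_{τ_R} ∈ B)`, as a measure on `E`. -/
noncomputable def embMeas {E : Type*} [MeasurableSpace E] (R R1 : Set E)
    (Pl : E → Measure (ℕ → E)) (x : E) : Measure E :=
  ((Pl x).restrict {ω | tauR R R1 ω ≠ ⊤}).map (fun ω => ω ((tauR R R1 ω).toNat))

/-- `k`-th iterate of a measure-valued map (sub-Markov transition function):
`Π^0(x,·) = δ_x`, `Π^{k+1}(x,B) = ∫ Π^k(y,B) Π(x,dy)`. -/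
noncomputable def mIter {E : Type*} [MeasurableSpace E] (Pi0 : E → Measure E) :
    ℕ → E → Measure E
  | 0 => fun x => Measure.dirac x
  | k + 1 => fun x => (Pi0 x).bind (mIter Pi0 k)

/-- The kernel `Q^u(x,·) = P^{u(x)}(x,·)` of a Borel measurable control `u`. -/
noncomputable def Qctrl {E U : Type*} [MeasurableSpace E] [MeasurableSpace U]
    (P : Kernel (E × U) E) (u : E → U) (hu : Measurable u) : Kernel E E :=
  P.comap (fun x => (x, u x)) (measurable_id.prodMk hu)

/-- Total variation distance `sup_{B ∈ 𝓔} |μ(B) − ν(B)|`. -/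
noncomputable def tvDist {E : Type*} [MeasurableSpace E] (μ ν : Measure E) : ℝ :=
  ⨆ B : {B : Set E // MeasurableSet B}, |(μ B.1).toReal - (ν B.1).toReal|

/-!
`Π^v(x, B) = P_x^v(G_B)` with `G_B = {τ_R < ∞, X_{τ_R} ∈ B}`. Split `G_B` into its part where
`τ_R ≤ N`, an event determined by `X₀, …, X_N`, and a remainder inside `{τ_R > N}`, whose
probability is at most `C / (N + 1)²` under every `P_x^v` by Markov's inequality and (EC).
For an event `S` determined by `X₀, …, X_N`, conditioning on the first step gives
`|P_x^{u_n}(S) - P_x^u(S)| ≤ E_x^u[∑_{k ≤ N} ‖Q^{u_n}(X_k, ·) - Q^u(X_k, ·)‖_TV]`, which tends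
to `0` as `n → ∞` by dominated convergence. Let first `n → ∞`, then `N → ∞`.
-/

open scoped Topology

section General

lemma tendsto_zero_of_forall_le_add {a c : ℕ → ℝ} {b : ℕ → ℕ → ℝ} (ha : ∀ n, 0 ≤ a n)
    (hab : ∀ N n, a n ≤ b N n + c N) (hb : ∀ N, Tendsto (b N) atTop (𝓝 0))
    (hc : Tendsto c atTop (𝓝 0)) : Tendsto a atTop (𝓝 0) := by
  refine tendsto_order.2 ⟨fun ε hε => .of_forall fun n => hε.trans_le (ha n), fun ε hε => ?_⟩
  obtain ⟨N, hN⟩ := (hc.eventually (gt_mem_nhds (half_pos hε))).exists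
  filter_upwards [(hb N).eventually (gt_mem_nhds (half_pos hε))] with n hn
  linarith [hab N n]

lemma ENNReal.abs_toReal_sub_le {a b d : ℝ≥0∞} (ha : a ≠ ⊤) (hb : b ≠ ⊤) (hd : d ≠ ⊤)
    (hab : a ≤ b + d) (hba : b ≤ a + d) : |a.toReal - b.toReal| ≤ d.toReal := by
  have h₁ := ENNReal.toReal_mono (ENNReal.add_ne_top.2 ⟨hb, hd⟩) hab
  have h₂ := ENNReal.toReal_mono (ENNReal.add_ne_top.2 ⟨ha, hd⟩) hba
  rw [ENNReal.toReal_add hb hd] at h₁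
  rw [ENNReal.toReal_add ha hd] at h₂
  exact abs_sub_le_iff.2 ⟨by linarith, by linarith⟩

lemma measurable_of_countable_index {α β γ : Type*} [MeasurableSpace α] [MeasurableSpace β]
    [MeasurableSpace γ] [Countable β] [MeasurableSingletonClass β] {F : β → α → γ}
    (hF : ∀ b, Measurable (F b)) {g : α → β} (hg : Measurable g) :
    Measurable fun a => F (g a) a :=
  (measurable_from_prod_countable_left (f := fun p : α × β => F p.2 p.1) hF).comp
    (measurable_id.prodMk hg)

variable {α : Type*} [MeasurableSpace α]

lemma measure_le_add_of_subset_of_subset_union {μ ν : Measure α} {A G T : Set α} {δ : ℝ≥0∞}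
    (hAG : A ⊆ G) (hGAT : G ⊆ A ∪ T) (hA : μ A ≤ ν A + δ) : μ G ≤ ν G + (δ + μ T) :=
  calc μ G ≤ μ A + μ T := (measure_mono hGAT).trans (measure_union_le A T)
    _ ≤ ν A + δ + μ T := by gcongr
    _ ≤ ν G + (δ + μ T) := by rw [add_assoc]; gcongr

/-- No measurability is needed: each lower integral is attained by a measurable minorant. -/
lemma tendsto_lintegral_zero_of_le_const (μ : Measure α) [IsFiniteMeasure μ]
    {F : ℕ → α → ℝ≥0∞} {c : ℝ≥0∞} (hc : c ≠ ⊤) (hFc : ∀ n a, F n a ≤ c)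
    (hF : ∀ a, Tendsto (F · a) atTop (𝓝 0)) :
    Tendsto (fun n => ∫⁻ a, F n a ∂μ) atTop (𝓝 0) := by
  choose g hgm hgF hgint using fun n => exists_measurable_le_lintegral_eq μ (F n)
  simp_rw [hgint]
  have hg : ∀ a, Tendsto (g · a) atTop (𝓝 0) := fun a =>
    tendsto_of_tendsto_of_tendsto_of_le_of_le tendsto_const_nhds (hF a)
      (fun _ => zero_le) (fun n => hgF n a)
  simpa using tendsto_lintegral_of_dominated_convergence (fun _ => c) hgm
    (fun n => .of_forall fun a => (hgF n a).trans (hFc n a))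
    (by simpa using ENNReal.mul_ne_top hc (measure_ne_top μ _)) (.of_forall hg)

/-- Layer cake: `∫ f = ∫₀¹ μ {f > s} ds` for `0 ≤ f ≤ 1`. -/
lemma lintegral_le_lintegral_add_of_forall_measure_le_add {μ ν : Measure α} {δ : ℝ≥0∞}
    (h : ∀ s, MeasurableSet s → μ s ≤ ν s + δ) {f : α → ℝ≥0∞} (hf : Measurable f)
    (hf1 : ∀ a, f a ≤ 1) : ∫⁻ a, f a ∂μ ≤ ∫⁻ a, f a ∂ν + δ := by
  have hfg : ∀ a, f a = ENNReal.ofReal (f a).toReal := fun a =>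
    (ENNReal.ofReal_toReal (ne_top_of_le_ne_top ENNReal.one_ne_top (hf1 a))).symm
  have hg1 : ∀ a, (f a).toReal ≤ 1 := fun a => ENNReal.toReal_le_of_le_ofReal zero_le_one
    (by simpa using hf1 a)
  have layer : ∀ ρ : Measure α, ∫⁻ a, f a ∂ρ = ∫⁻ t in Set.Ioi 0, ρ {a | t < (f a).toReal} :=
    fun ρ => by
      rw [lintegral_congr hfg]
      exact lintegral_eq_lintegral_meas_lt ρ (.of_forall fun _ => ENNReal.toReal_nonneg)
        hf.ennreal_toReal.aemeasurable
  have hpt : ∀ t : ℝ, μ {a | t < (f a).toReal} ≤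
      ν {a | t < (f a).toReal} + (Set.Iic 1).indicator (fun _ => δ) t := by
    intro t
    by_cases ht : t ≤ 1
    · rw [Set.indicator_of_mem (Set.mem_Iic.2 ht)]
      exact h _ (measurableSet_lt measurable_const hf.ennreal_toReal)
    · have : {a | t < (f a).toReal} = ∅ :=
        Set.eq_empty_of_forall_notMem fun a ha => ht ((le_of_lt ha).trans (hg1 a))
      simp [this]
  rw [layer μ, layer ν]
  calc ∫⁻ t in Set.Ioi 0, μ {a | t < (f a).toReal}
      ≤ ∫⁻ t in Set.Ioi 0, (ν {a | t < (f a).toReal} + (Set.Iic 1).indicator (fun _ => δ) t) :=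
        lintegral_mono hpt
    _ = (∫⁻ t in Set.Ioi 0, ν {a | t < (f a).toReal}) + δ := by
        rw [lintegral_add_right _ (measurable_const.indicator measurableSet_Iic),
          lintegral_indicator_const measurableSet_Iic, Measure.restrict_apply measurableSet_Iic,
          Set.Iic_inter_Ioi, Real.volume_Ioc]
        simp

end General

section TotalVariation

variable {E : Type*} [MeasurableSpace E] {μ ν : Measure E}

lemma tvDist_comm (μ ν : Measure E) : tvDist μ ν = tvDist ν μ := by
  simp only [tvDist, abs_sub_comm]

lemma abs_toReal_sub_le_one [IsProbabilityMeasure μ] [IsProbabilityMeasure ν] (s : Set E) :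
    |(μ s).toReal - (ν s).toReal| ≤ 1 :=
  abs_sub_le_of_nonneg_of_le ENNReal.toReal_nonneg measureReal_le_one ENNReal.toReal_nonneg
    measureReal_le_one

lemma tvDist_le_one [IsProbabilityMeasure μ] [IsProbabilityMeasure ν] : tvDist μ ν ≤ 1 :=
  Real.iSup_le (fun B => abs_toReal_sub_le_one B.1) zero_le_one

lemma measure_le_add_tvDist [IsProbabilityMeasure μ] [IsProbabilityMeasure ν] {s : Set E}
    (hs : MeasurableSet s) : μ s ≤ ν s + ENNReal.ofReal (tvDist μ ν) := by
  have hsup : |(μ s).toReal - (ν s).toReal| ≤ tvDist μ ν :=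
    le_ciSup (f := fun B : {B : Set E // MeasurableSet B} => |(μ B.1).toReal - (ν B.1).toReal|)
      ⟨1, Set.forall_mem_range.2 fun B => abs_toReal_sub_le_one B.1⟩ ⟨s, hs⟩
  rw [← ENNReal.ofReal_toReal (measure_ne_top μ s), ← ENNReal.ofReal_toReal (measure_ne_top ν s),
    ← ENNReal.ofReal_add ENNReal.toReal_nonneg ((abs_nonneg _).trans hsup)]
  exact ENNReal.ofReal_le_ofReal (by linarith [le_abs_self ((μ s).toReal - (ν s).toReal)])

end TotalVariation

section HittingTimes

variable {E : Type*} {B R R1 : Set E} {ω ω' : ℕ → E}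

lemma hitTime_eq_top_iff : hitTime B ω = ⊤ ↔ ∀ n, ω n ∉ B := by
  simp [hitTime]

lemma hitTime_eq_natCast_iff {k : ℕ} : hitTime B ω = k ↔ ω k ∈ B ∧ ∀ j < k, ω j ∉ B := by
  classical
  by_cases h : ∃ n, ω n ∈ B
  · rw [show hitTime B ω = ↑(sInf {n | ω n ∈ B}) from (ENat.natCast_sInf h).symm, Nat.cast_inj,
      Nat.sInf_def (s := {n | ω n ∈ B}) h, Nat.find_eq_iff]
    rfl
  · push Not at h
    simp [hitTime_eq_top_iff.2 h, h]

lemma hitTime_congr {N : ℕ} (h : ∀ j ≤ N, ω j = ω' j) (hN : hitTime B ω ≤ N) :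
    hitTime B ω' = hitTime B ω := by
  obtain ⟨k, hk⟩ := ENat.ne_top_iff_exists.1 (ne_top_of_le_ne_top (ENat.natCast_ne_top N) hN)
  have hkN : k ≤ N := by rw [← hk] at hN; exact_mod_cast hN
  rw [← hk, hitTime_eq_natCast_iff]
  obtain ⟨hkB, hjB⟩ := hitTime_eq_natCast_iff.1 hk.symm
  exact ⟨h k hkN ▸ hkB, fun j hj => h j (by omega) ▸ hjB j hj⟩

lemma tauR_congr {N : ℕ} (h : ∀ j ≤ N, ω j = ω' j) (hN : tauR R R1 ω ≤ N) :
    tauR R R1 ω' = tauR R R1 ω := by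
  unfold tauR at hN ⊢
  have hexit := le_self_add.trans hN
  rw [hitTime_congr h hexit]
  obtain ⟨i, hi⟩ := ENat.ne_top_iff_exists.1 (ne_top_of_le_ne_top (ENat.natCast_ne_top N) hexit)
  rw [← hi, ENat.toNat_natCast] at hN ⊢
  have hentry := le_add_self.trans hN
  obtain ⟨j, hj⟩ := ENat.ne_top_iff_exists.1 (ne_top_of_le_ne_top (ENat.natCast_ne_top N) hentry)
  rw [← hj] at hN
  have hij : i + j ≤ N := by exact_mod_cast hN
  rw [hitTime_congr (N := j) (fun l hl => h (i + l) (by omega)) hj.symm.le]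

end HittingTimes

section ReturnEvents

variable {E : Type*} {B R R1 : Set E}

def returnEvent (R R1 B : Set E) : Set (ℕ → E) :=
  {ω | tauR R R1 ω ≠ ⊤ ∧ ω (tauR R R1 ω).toNat ∈ B}

def returnEventUpTo (R R1 B : Set E) (N : ℕ) : Set (ℕ → E) :=
  {ω | tauR R R1 ω ≤ N ∧ ω (tauR R R1 ω).toNat ∈ B}

lemma dependsOn_returnEventUpTo (N : ℕ) :
    DependsOn (· ∈ returnEventUpTo R R1 B N) (Set.Iio (N + 1)) := by
  have key : ∀ {ω ω' : ℕ → E}, (∀ j ≤ N, ω j = ω' j) →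
      ω ∈ returnEventUpTo R R1 B N → ω' ∈ returnEventUpTo R R1 B N := by
    rintro ω ω' h ⟨hN, hB⟩
    show tauR R R1 ω' ≤ N ∧ ω' (tauR R R1 ω').toNat ∈ B
    rw [tauR_congr h hN, ← h _ (ENat.toNat_le_of_le_natCast hN)]
    exact ⟨hN, hB⟩
  intro ω ω' h
  have h' : ∀ j ≤ N, ω j = ω' j := fun j hj => h j (Nat.lt_succ_of_le hj)
  exact propext ⟨key h', key fun j hj => (h' j hj).symm⟩

lemma returnEventUpTo_subset_returnEvent (N : ℕ) :
    returnEventUpTo R R1 B N ⊆ returnEvent R R1 B :=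
  fun _ ⟨hN, hB⟩ => ⟨ne_top_of_le_ne_top (ENat.natCast_ne_top N) hN, hB⟩

lemma returnEvent_subset_union (N : ℕ) :
    returnEvent R R1 B ⊆ returnEventUpTo R R1 B N ∪
      {ω | ((N : ℝ≥0∞) + 1) ^ 2 ≤ (tauR R R1 ω : ℝ≥0∞) ^ 2} := by
  rintro ω ⟨-, hB⟩
  by_cases hN : tauR R R1 ω ≤ N
  · exact Or.inl ⟨hN, hB⟩
  · have h : ((N : ℕ∞) + 1 : ℕ∞) ≤ tauR R R1 ω := Order.add_one_le_of_lt (not_le.1 hN)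
    have h' : (N : ℝ≥0∞) + 1 ≤ (tauR R R1 ω : ℝ≥0∞) := by exact_mod_cast h
    exact Or.inr (pow_le_pow_left' h' 2)

variable [MeasurableSpace E]

lemma measurable_hitTime (hB : MeasurableSet B) : Measurable (hitTime B) := by
  refine measurable_to_countable' fun k => ?_
  induction k using ENat.recTopCoe with
  | top =>
    simp only [Set.preimage, Set.mem_singleton_iff, hitTime_eq_top_iff, Set.ofPred_forall]
    exact .iInter fun n => (measurable_pi_apply n hB).compl
  | coe k =>
    simp only [Set.preimage, Set.mem_singleton_iff, hitTime_eq_natCast_iff, Set.ofPred_and,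
      Set.ofPred_forall]
    exact (measurable_pi_apply k hB).inter
      (.iInter fun j => .iInter fun _ => (measurable_pi_apply j hB).compl)

lemma measurable_tauR (hR : MeasurableSet R) (hR1 : MeasurableSet R1) :
    Measurable (tauR R R1) := by
  have hshift : ∀ k : ℕ∞, Measurable fun ω : ℕ → E => hitTime R fun n => ω (k.toNat + n) :=
    fun k => (measurable_hitTime hR).comp (measurable_pi_lambda _ fun _ => measurable_pi_apply _)
  unfold tauR
  exact (measurable_of_countable_index (F := fun k ω => k + hitTime R fun n => ω (k.toNat + n))
    (fun k => (Measurable.of_discrete (f := fun m : ℕ∞ => k + m)).comp (hshift k))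
    (measurable_hitTime hR1.compl) :)

lemma measurable_apply_tauR (hR : MeasurableSet R) (hR1 : MeasurableSet R1) :
    Measurable fun ω : ℕ → E => ω (tauR R R1 ω).toNat :=
  measurable_of_countable_index (F := fun k ω => ω k.toNat) (fun _ => measurable_pi_apply _)
    (measurable_tauR hR hR1)

lemma measurableSet_returnEventUpTo (hR : MeasurableSet R) (hR1 : MeasurableSet R1)
    (hB : MeasurableSet B) (N : ℕ) : MeasurableSet (returnEventUpTo R R1 B N) :=
  (measurable_tauR hR hR1 .of_discrete).inter (measurable_apply_tauR hR hR1 hB)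

lemma embMeas_apply (hR : MeasurableSet R) (hR1 : MeasurableSet R1) (hB : MeasurableSet B)
    (Pl : E → Measure (ℕ → E)) (x : E) :
    embMeas R R1 Pl x B = Pl x (returnEvent R R1 B) := by
  rw [embMeas, Measure.map_apply (measurable_apply_tauR hR hR1) hB,
    Measure.restrict_apply (measurable_apply_tauR hR hR1 hB)]
  congr 1
  ext ω
  simp [returnEvent, and_comm]

lemma measure_le_div_sq_of_lintegral_le (hR : MeasurableSet R) (hR1 : MeasurableSet R1)
    {μ : Measure (ℕ → E)} {C : ℝ≥0∞} (hC : ∫⁻ ω, (tauR R R1 ω : ℝ≥0∞) ^ 2 ∂μ ≤ C) (N : ℕ) :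
    μ {ω | ((N : ℝ≥0∞) + 1) ^ 2 ≤ (tauR R R1 ω : ℝ≥0∞) ^ 2} ≤ C / ((N : ℝ≥0∞) + 1) ^ 2 :=
  (meas_ge_le_lintegral_div (ε := ((N : ℝ≥0∞) + 1) ^ 2)
    ((Measurable.of_discrete (f := fun k : ℕ∞ => (k : ℝ≥0∞) ^ 2)).comp
      (measurable_tauR hR hR1)).aemeasurable
    (pow_ne_zero 2 (by simp)) (by finiteness)).trans (ENNReal.div_le_div_right hC _)

end ReturnEvents

section PathLaws

variable {E : Type*}

lemma DependsOn.comp_prepend {β : Type*} {f : (ℕ → E) → β} {N : ℕ}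
    (hf : DependsOn f (Set.Iio (N + 1))) (x : E) : DependsOn (f ∘ prepend x) (Set.Iio N) := by
  intro ω ω' h
  refine hf fun n hn => ?_
  cases n with
  | zero => rfl
  | succ k => exact h k (Nat.succ_lt_succ_iff.1 hn)

variable [MeasurableSpace E] {Q Q' : Kernel E E} {Pl Pl' : E → Measure (ℕ → E)}

lemma measurable_prepend (x : E) : Measurable (prepend x) :=
  measurable_pi_lambda _ fun n => by cases n; exacts [measurable_const, measurable_pi_apply _]

lemma IsPathLaw.apply_eq_lintegral (hPl : IsPathLaw Q Pl) (x : E) {S : Set (ℕ → E)}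
    (hS : MeasurableSet S) : Pl x S = ∫⁻ y, Pl y (prepend x ⁻¹' S) ∂Q x := by
  conv_lhs => rw [hPl.2.2 x]
  rw [Measure.map_apply (measurable_prepend x) hS,
    Measure.bind_apply (measurable_prepend x hS) hPl.1.aemeasurable]

/-- `cumulativeError Q t N x = E_x[t(X₀) + ⋯ + t(X_{N-1})]` for the chain with kernel `Q`, the
expectation being a lower integral since `t` need not be measurable. -/
noncomputable def cumulativeError (Q : Kernel E E) (t : E → ℝ≥0∞) : ℕ → E → ℝ≥0∞
  | 0 => 0
  | N + 1 => fun x => t x + ∫⁻ y, cumulativeError Q t N y ∂Q x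

lemma cumulativeError_le [IsMarkovKernel Q] {t : E → ℝ≥0∞} (ht : ∀ x, t x ≤ 1) :
    ∀ N x, cumulativeError Q t N x ≤ N
  | 0, _ => by simp [cumulativeError]
  | N + 1, x =>
    calc t x + ∫⁻ y, cumulativeError Q t N y ∂Q x ≤ 1 + ∫⁻ _, (N : ℝ≥0∞) ∂Q x :=
          add_le_add (ht x) (lintegral_mono fun y => cumulativeError_le ht N y)
      _ = (N + 1 : ℕ) := by simp [add_comm]

lemma tendsto_cumulativeError [IsMarkovKernel Q] {T : ℕ → E → ℝ≥0∞} (hT1 : ∀ n x, T n x ≤ 1)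
    (hT : ∀ x, Tendsto (T · x) atTop (𝓝 0)) (N : ℕ) (x : E) :
    Tendsto (fun n => cumulativeError Q (T n) N x) atTop (𝓝 0) := by
  induction N generalizing x with
  | zero => exact tendsto_const_nhds
  | succ N ih =>
    simpa [cumulativeError] using (hT x).add (tendsto_lintegral_zero_of_le_const (Q x)
      (ENNReal.natCast_ne_top N) (fun n y => cumulativeError_le (hT1 n) N y) ih)

/-- Condition on the first step: both laws disintegrate through `prepend`, and `prepend x ⁻¹' S`
depends on one coordinate fewer than `S`. -/
theorem IsPathLaw.measure_le_add_cumulativeError (hPl : IsPathLaw Q Pl) (hPl' : IsPathLaw Q' Pl')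
    {t : E → ℝ≥0∞}
    (ht : ∀ x s, MeasurableSet s → Q' x s ≤ Q x s + t x ∧ Q x s ≤ Q' x s + t x) (N : ℕ) :
    ∀ x {S : Set (ℕ → E)}, MeasurableSet S → DependsOn (· ∈ S) (Set.Iio N) →
      Pl' x S ≤ Pl x S + cumulativeError Q t N x ∧
        Pl x S ≤ Pl' x S + cumulativeError Q t N x := by
  induction N with
  | zero =>
    intro x S _ hS
    have := hPl.2.1 x
    have := hPl'.2.1 x
    have hPlS : Pl' x S = Pl x S := by
      rcases S.eq_empty_or_nonempty with rfl | ⟨ω, hω⟩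
      · simp
      · rw [Set.eq_univ_of_forall fun ω' => (hS fun i hi => absurd hi i.not_lt_zero).mp hω]
        simp
    simp [cumulativeError, hPlS]
  | succ N ih =>
    intro x S hSm hS
    set S' := prepend x ⁻¹' S
    have hS'm : MeasurableSet S' := measurable_prepend x hSm
    have ih' := fun y => ih y hS'm (hS.comp_prepend x)
    have hf : Measurable fun y => Pl y S' := (Measure.measurable_coe hS'm).comp hPl.1
    have hf' : Measurable fun y => Pl' y S' := (Measure.measurable_coe hS'm).comp hPl'.1
    have hf'1 : ∀ y, Pl' y S' ≤ 1 := fun y => by have := hPl'.2.1 y; exact prob_le_one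
    rw [hPl.apply_eq_lintegral x hSm, hPl'.apply_eq_lintegral x hSm]
    constructor
    · calc ∫⁻ y, Pl' y S' ∂Q' x ≤ ∫⁻ y, Pl' y S' ∂Q x + t x :=
            lintegral_le_lintegral_add_of_forall_measure_le_add (fun s hs => (ht x s hs).1) hf' hf'1
        _ ≤ ∫⁻ y, (Pl y S' + cumulativeError Q t N y) ∂Q x + t x := by
            gcongr with y
            exact (ih' y).1
        _ = ∫⁻ y, Pl y S' ∂Q x + cumulativeError Q t (N + 1) x := by
            rw [lintegral_add_left hf, cumulativeError]
            ring
    · calc ∫⁻ y, Pl y S' ∂Q x ≤ ∫⁻ y, (Pl' y S' + cumulativeError Q t N y) ∂Q x :=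
            lintegral_mono fun y => (ih' y).2
        _ = ∫⁻ y, Pl' y S' ∂Q x + ∫⁻ y, cumulativeError Q t N y ∂Q x := lintegral_add_left hf' _
        _ ≤ ∫⁻ y, Pl' y S' ∂Q' x + t x + ∫⁻ y, cumulativeError Q t N y ∂Q x := by
            gcongr
            exact lintegral_le_lintegral_add_of_forall_measure_le_add
              (fun s hs => (ht x s hs).2) hf' hf'1
        _ = ∫⁻ y, Pl' y S' ∂Q' x + cumulativeError Q t (N + 1) x := by
            rw [cumulativeError]
            ring

theorem abs_embMeas_toReal_sub_le [IsMarkovKernel Q] {R R1 B : Set E}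
    (hR : MeasurableSet R) (hR1 : MeasurableSet R1) (hB : MeasurableSet B)
    (hPl : IsPathLaw Q Pl) (hPl' : IsPathLaw Q' Pl') {t : E → ℝ≥0∞} (ht1 : ∀ x, t x ≤ 1)
    (ht : ∀ x s, MeasurableSet s → Q' x s ≤ Q x s + t x ∧ Q x s ≤ Q' x s + t x)
    {C : ℝ≥0∞} (hC : C ≠ ⊤) {x : E} (hCx : ∫⁻ ω, (tauR R R1 ω : ℝ≥0∞) ^ 2 ∂Pl x ≤ C)
    (hCx' : ∫⁻ ω, (tauR R R1 ω : ℝ≥0∞) ^ 2 ∂Pl' x ≤ C) (N : ℕ) :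
    |(embMeas R R1 Pl' x B).toReal - (embMeas R R1 Pl x B).toReal| ≤
      (cumulativeError Q t (N + 1) x).toReal + (C / ((N : ℝ≥0∞) + 1) ^ 2).toReal := by
  have := hPl.2.1 x
  have := hPl'.2.1 x
  have hce : cumulativeError Q t (N + 1) x ≠ ⊤ :=
    ne_top_of_le_ne_top (ENNReal.natCast_ne_top _) (cumulativeError_le ht1 (N + 1) x)
  have htail : C / ((N : ℝ≥0∞) + 1) ^ 2 ≠ ⊤ := ENNReal.div_ne_top hC (pow_ne_zero 2 (by simp))
  obtain ⟨hle', hle⟩ := hPl.measure_le_add_cumulativeError hPl' ht (N + 1) x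
    (measurableSet_returnEventUpTo hR hR1 hB N) (dependsOn_returnEventUpTo N)
  rw [embMeas_apply hR hR1 hB, embMeas_apply hR hR1 hB, ← ENNReal.toReal_add hce htail]
  refine ENNReal.abs_toReal_sub_le (measure_ne_top _ _) (measure_ne_top _ _)
    (ENNReal.add_ne_top.2 ⟨hce, htail⟩) ?_ ?_
  · refine (measure_le_add_of_subset_of_subset_union (returnEventUpTo_subset_returnEvent N)
      (returnEvent_subset_union N) hle').trans ?_
    gcongr
    exact measure_le_div_sq_of_lintegral_le hR hR1 hCx' N
  · refine (measure_le_add_of_subset_of_subset_union (returnEventUpTo_subset_returnEvent N)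
      (returnEvent_subset_union N) hle).trans ?_
    gcongr
    exact measure_le_div_sq_of_lintegral_le hR hR1 hCx N

end PathLaws

instance {E U : Type*} [MeasurableSpace E] [MeasurableSpace U] (P : Kernel (E × U) E)
    [IsMarkovKernel P] (u : E → U) (hu : Measurable u) : IsMarkovKernel (Qctrl P u hu) := by
  unfold Qctrl
  infer_instance

lemma tendsto_div_add_one_sq_toReal {C : ℝ≥0∞} (hC : C ≠ ⊤) :
    Tendsto (fun N : ℕ => (C / ((N : ℝ≥0∞) + 1) ^ 2).toReal) atTop (𝓝 0) := by
  have hsq : Tendsto (fun N : ℕ => ((N : ℝ≥0∞) + 1) ^ 2) atTop (𝓝 ⊤) :=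
    tendsto_nhds_top_mono ENNReal.tendsto_nat_nhds_top (.of_forall fun N =>
      le_self_add.trans (le_self_pow₀ le_add_self two_ne_zero))
  refine (ENNReal.tendsto_toReal_zero_iff fun N =>
    ENNReal.div_ne_top hC (pow_ne_zero 2 (by simp))).2 ?_
  simpa using ENNReal.Tendsto.const_div hsq (Or.inr hC)

theorem stmt15_general {E U : Type*} [MetricSpace E]
    [MeasurableSpace E] [BorelSpace E]
    [MeasurableSpace U]
    (P : Kernel (E × U) E) [IsMarkovKernel P]
    -- two concentric closed balls R ⊆ R₁
    (z : E) (r r1 : ℝ)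
    (R R1 : Set E) (hR : R = Metric.closedBall z r) (hR1 : R1 = Metric.closedBall z r1)
    (un : ℕ → E → U) (u : E → U)
    (hun : ∀ n, Measurable (un n)) (hu : Measurable u)
    (htv : ∀ x, Tendsto
      (fun n => tvDist (Qctrl P (un n) (hun n) x) (Qctrl P u hu x)) atTop (nhds 0))
    -- the path laws of the controlled chains
    (Pln : ℕ → E → Measure (ℕ → E)) (Plu : E → Measure (ℕ → E))
    (hPln : ∀ n, IsPathLaw (Qctrl P (un n) (hun n)) (Pln n))
    (hPlu : IsPathLaw (Qctrl P u hu) Plu)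
    -- (EC): uniformly bounded second moments of τ_R for starting points in R
    (hEC : ∃ C : ℝ≥0∞, C ≠ ⊤ ∧ ∀ x ∈ R,
      (∀ n, ∫⁻ ω, ((tauR R R1 ω : ℝ≥0∞)) ^ 2 ∂ (Pln n x) ≤ C) ∧
      ∫⁻ ω, ((tauR R R1 ω : ℝ≥0∞)) ^ 2 ∂ (Plu x) ≤ C) :
    ∀ x ∈ R,
      Tendsto (fun n => ⨆ B : {B : Set E // MeasurableSet B ∧ B ⊆ R},
          |(embMeas R R1 (Pln n) x B.1).toReal - (embMeas R R1 Plu x B.1).toReal|)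
        atTop (nhds 0) := by
  intro x hx
  obtain ⟨C, hC, hEC⟩ := hEC
  have hRm : MeasurableSet R := hR ▸ Metric.isClosed_closedBall.measurableSet
  have hR1m : MeasurableSet R1 := hR1 ▸ Metric.isClosed_closedBall.measurableSet
  set T : ℕ → E → ℝ≥0∞ := fun n y =>
    ENNReal.ofReal (tvDist (Qctrl P (un n) (hun n) y) (Qctrl P u hu y))
  have hT1 : ∀ n y, T n y ≤ 1 := fun n y => ENNReal.ofReal_le_one.2 tvDist_le_one
  have hT0 : ∀ y, Tendsto (T · y) atTop (𝓝 0) := fun y => by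
    simpa using ENNReal.tendsto_ofReal (htv y)
  have hT : ∀ n y s, MeasurableSet s →
      Qctrl P (un n) (hun n) y s ≤ Qctrl P u hu y s + T n y ∧
        Qctrl P u hu y s ≤ Qctrl P (un n) (hun n) y s + T n y := fun n y s hs =>
    ⟨measure_le_add_tvDist hs, by
      rw [show T n y = _ from congrArg ENNReal.ofReal (tvDist_comm _ _)]
      exact measure_le_add_tvDist hs⟩
  refine tendsto_zero_of_forall_le_add (fun n => Real.iSup_nonneg fun _ => abs_nonneg _)
    (fun N n => Real.iSup_le (fun B => abs_embMeas_toReal_sub_le hRm hR1m B.2.1 hPlu (hPln n)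
      (hT1 n) (hT n) hC (hEC x hx).2 ((hEC x hx).1 n) N) (by positivity))
    (fun N => ?_) (tendsto_div_add_one_sq_toReal hC)
  exact (ENNReal.tendsto_toReal_zero_iff fun n =>
    ne_top_of_le_ne_top (ENNReal.natCast_ne_top _) (cumulativeError_le (hT1 n) (N + 1) x)).2
    (tendsto_cumulativeError hT1 hT0 (N + 1) x)

/-- Proposition 4: under (EC) and total variation convergence of the
controlled kernels along `u_n → u`, the embedded kernels converge in total variation
on Borel subsets of `R`, for every starting point `x ∈ R`. -/
theorem stmt15 {E U : Type*} [MetricSpace E] [PolishSpace E]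
    [MeasurableSpace E] [BorelSpace E]
    [MetricSpace U] [CompactSpace U] [MeasurableSpace U] [BorelSpace U]
    (P : Kernel (E × U) E) [IsMarkovKernel P]
    -- two concentric closed balls R ⊆ R₁
    (z : E) (r r1 : ℝ) (hr : r ≤ r1)
    (R R1 : Set E) (hR : R = Metric.closedBall z r) (hR1 : R1 = Metric.closedBall z r1)
    (un : ℕ → E → U) (u : E → U)
    (hun : ∀ n, Measurable (un n)) (hu : Measurable u)
    (hconv : ∀ x, Tendsto (fun n => un n x) atTop (nhds (u x)))
    (htv : ∀ x, Tendsto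
      (fun n => tvDist (Qctrl P (un n) (hun n) x) (Qctrl P u hu x)) atTop (nhds 0))
    -- the path laws of the controlled chains
    (Pln : ℕ → E → Measure (ℕ → E)) (Plu : E → Measure (ℕ → E))
    (hPln : ∀ n, IsPathLaw (Qctrl P (un n) (hun n)) (Pln n))
    (hPlu : IsPathLaw (Qctrl P u hu) Plu)
    -- (EC): uniformly bounded second moments of τ_R for starting points in R
    (hEC : ∃ C : ℝ≥0∞, C ≠ ⊤ ∧ ∀ x ∈ R,
      (∀ n, ∫⁻ ω, ((tauR R R1 ω : ℝ≥0∞)) ^ 2 ∂ (Pln n x) ≤ C) ∧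
      ∫⁻ ω, ((tauR R R1 ω : ℝ≥0∞)) ^ 2 ∂ (Plu x) ≤ C) :
    ∀ x ∈ R,
      Tendsto (fun n => ⨆ B : {B : Set E // MeasurableSet B ∧ B ⊆ R},
          |(embMeas R R1 (Pln n) x B.1).toReal - (embMeas R R1 Plu x B.1).toReal|)
        atTop (nhds 0) :=
  stmt15_general P z r r1 R R1 hR hR1 un u hun hu htv Pln Plu hPln hPlu hEC
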